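/- arXiv:2605.23720 — 6 statements merged into one kernel-verified Lean document; each statement's English description precedes it below -/
import Mathlib

section
/- If the sequences of polynomials C_n and D_n satisfy C_{n+1}(x) = -C_n(x) + 2(x-β_n)D_n(x) and γ_{n+1}D_{n+1}(x) = -Φ(x) + γ_n D_{n-1}(x) - (x-β_n)C_n(x) + (x-β_n)²D_n(x) for all n ≥ 0 (with D_{-1} = B, γ_0 arbitrary interpreted so the n=0 case reads γ_1 D_1 = -Φ + (x-β_0)²D_0 - (x-β_0)C_0), then for all n ≥ 0: γ_{n+1} D_n(x) D_{n+1}(x) - (1/4)(C_{n+1}(x)² - C_0(x)²) = -Φ(x) · Σ_{ν=0}^{n} D_ν(x). -/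
open Polynomial

lemma sq_sub_sq_eq_of_eq_neg_add {R : Type*} [CommRing R] {c c' y d : R}
    (h : c' = -c + 2 * y * d) : c' ^ 2 - c ^ 2 = 4 * (y ^ 2 * d ^ 2 - y * c * d) := by
  subst h
  ring

/-- Multiplying the second relation by `d n` shows that `g (n+1) d n d (n+1) - c (n+1)² / 4`
changes by `-φ d n` from one index to the next, so the sum telescopes; the `4` is cleared
to stay in an arbitrary commutative ring. -/
theorem four_mul_structure_relation_sum {R : Type*} [CommRing R] (φ : R) (g c d y : ℕ → R)
    (hc : ∀ n, c (n + 1) = -c n + 2 * y n * d n)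
    (hd₀ : g 1 * d 1 = -φ + y 0 ^ 2 * d 0 - y 0 * c 0)
    (hd : ∀ n, g (n + 2) * d (n + 2) =
      -φ + g (n + 1) * d n - y (n + 1) * c (n + 1) + y (n + 1) ^ 2 * d (n + 1)) :
    ∀ n, 4 * (g (n + 1) * (d n * d (n + 1))) - (c (n + 1) ^ 2 - c 0 ^ 2)
      = -(4 * φ) * ∑ ν ∈ Finset.range (n + 1), d ν := by
  intro n
  induction n with
  | zero =>
    rw [Finset.sum_range_one]
    linear_combination 4 * d 0 * hd₀ - sq_sub_sq_eq_of_eq_neg_add (hc 0)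
  | succ n ih =>
    rw [Finset.sum_range_succ]
    linear_combination 4 * d (n + 1) * hd n + ih - sq_sub_sq_eq_of_eq_neg_add (hc (n + 1))

theorem laguerre_hahn_sum_identity_general
    (Φ : Polynomial ℂ) (β γ : ℕ → ℂ) (Cc Dd : ℕ → Polynomial ℂ)
    (hSR1 : ∀ n, Cc (n + 1) = -Cc n + 2 * (X - C (β n)) * Dd n)
    (hbase : C (γ 1) * Dd 1 =
      -Φ + (X - C (β 0)) ^ 2 * Dd 0 - (X - C (β 0)) * Cc 0)
    (hSR2 : ∀ n, 1 ≤ n → C (γ (n + 1)) * Dd (n + 1) =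
      -Φ + C (γ n) * Dd (n - 1) - (X - C (β n)) * Cc n
        + (X - C (β n)) ^ 2 * Dd n) :
    ∀ n, C (γ (n + 1)) * (Dd n * Dd (n + 1))
        - C (1 / 4 : ℂ) * ((Cc (n + 1)) ^ 2 - (Cc 0) ^ 2)
      = -Φ * ∑ ν ∈ Finset.range (n + 1), Dd ν := by
  intro n
  have hquarter : C (1 / 4 : ℂ) * 4 = 1 := by
    rw [← map_ofNat C 4, ← C_mul, ← C_1]
    norm_num
  have key := four_mul_structure_relation_sum Φ (fun n ↦ C (γ n)) Cc Dd (fun n ↦ X - C (β n))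
    hSR1 hbase (fun n ↦ by simpa using hSR2 (n + 1) n.succ_pos) n
  linear_combination C (1 / 4 : ℂ) * key
    - (C (γ (n + 1)) * (Dd n * Dd (n + 1)) + Φ * ∑ ν ∈ Finset.range (n + 1), Dd ν) * hquarter

/-- Laguerre–Hahn structure-relation recurrences imply the summation identity
`γ_{n+1} D_n D_{n+1} - (1/4)(C_{n+1}² - C_0²) = -Φ · Σ_{ν=0}^{n} D_ν`. -/
theorem laguerre_hahn_sum_identity
    (Φ : Polynomial ℂ) (β γ : ℕ → ℂ) (Cc Dd : ℕ → Polynomial ℂ)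
    (hγ : ∀ n, γ (n + 1) ≠ 0)
    (hSR1 : ∀ n, Cc (n + 1) = -Cc n + 2 * (X - C (β n)) * Dd n)
    (hbase : C (γ 1) * Dd 1 =
      -Φ + (X - C (β 0)) ^ 2 * Dd 0 - (X - C (β 0)) * Cc 0)
    (hSR2 : ∀ n, 1 ≤ n → C (γ (n + 1)) * Dd (n + 1) =
      -Φ + C (γ n) * Dd (n - 1) - (X - C (β n)) * Cc n
        + (X - C (β n)) ^ 2 * Dd n) :
    ∀ n, C (γ (n + 1)) * (Dd n * Dd (n + 1))
        - C (1 / 4 : ℂ) * ((Cc (n + 1)) ^ 2 - (Cc 0) ^ 2)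
      = -Φ * ∑ ν ∈ Finset.range (n + 1), Dd ν :=
  laguerre_hahn_sum_identity_general Φ β γ Cc Dd hSR1 hbase hSR2
end

section
/- The monic Hermite polynomials satisfy the third structure relation H_{n+1}^{(3)}(x) + 2(n+1)H_{n+1}'(x) + 4(n+1)x·H_{n+1}(x) = 2(n+1)(2x²+1)·H_n(x) for all n ≥ 0. -/
open Polynomial

/-- The monic Hermite polynomials satisfy the third structure relation
`H_{n+1}⁽³⁾ + 2(n+1)H_{n+1}' + 4(n+1)x·H_{n+1} = 2(n+1)(2x²+1)·H_n`. -/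
theorem hermite_third_structure_relation
    (H : ℕ → Polynomial ℝ)
    (h0 : H 0 = 1) (h1 : H 1 = X)
    (hrec : ∀ n, H (n + 2) = X * H (n + 1) - C (((n : ℝ) + 1) / 2) * H n) :
    ∀ n, derivative (derivative (derivative (H (n + 1))))
        + C (2 * ((n : ℝ) + 1)) * derivative (H (n + 1))
        + C (4 * ((n : ℝ) + 1)) * X * H (n + 1)
      = C (2 * ((n : ℝ) + 1)) * (2 * X ^ 2 + 1) * H n := by
  have hC2 : (C (2:ℝ) : Polynomial ℝ) ≠ 0 := by
    simp
  -- denominator-free recurrence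
  have hrec2 : ∀ n, C (2:ℝ) * H (n+2) = C 2 * (X * H (n+1)) - C ((n:ℝ)+1) * H n := by
    intro n
    have hc : (C (2:ℝ) : Polynomial ℝ) * C (((n:ℝ)+1)/2) = C ((n:ℝ)+1) := by
      rw [← C_mul, show (2:ℝ) * (((n:ℝ)+1)/2) = (n:ℝ)+1 from by ring]
    linear_combination C (2:ℝ) * hrec n - H n * hc
  -- derivative formula
  have hd : ∀ n, derivative (H (n+1)) = C ((n:ℝ)+1) * H n := by
    intro n
    induction n using Nat.strong_induction_on with
    | _ n ih =>
      match n with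
      | 0 => simp [h0, h1]
      | 1 =>
        apply mul_left_cancel₀ hC2
        have e := congrArg derivative (hrec2 0)
        simp only [derivative_mul, derivative_C, derivative_X, zero_mul, add_zero,
          zero_add, derivative_sub, h0, h1, derivative_one, mul_zero, mul_one,
          sub_zero, one_mul] at e
        rw [e, h1]
        push_cast
        simp only [map_add, map_one, map_zero, map_ofNat]
        ring
      | (m+2) =>
        apply mul_left_cancel₀ hC2
        have e := congrArg derivative (hrec2 (m+1))
        simp only [derivative_mul, derivative_C, derivative_X, zero_mul, add_zero,
          zero_add, derivative_sub, one_mul] at e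
        rw [ih (m+1) (by omega), ih m (by omega)] at e
        have r := hrec2 m
        simp only [show m+1+2 = m+3 from rfl, show m+1+1 = m+2 from rfl,
          show m+2+1 = m+3 from rfl] at e ⊢
        push_cast at e r ⊢
        simp only [map_add, map_one, map_zero, map_ofNat] at e r ⊢
        linear_combination e - ((C (m:ℝ)) + 2) * r
  intro n
  match n with
  | 0 =>
    simp only [Nat.cast_zero, h0, h1, zero_add]
    simp [derivative_X]
    simp only [map_add, map_one, map_zero, map_ofNat]
    ring
  | 1 =>
    have d1 := hd 1
    push_cast at d1
    have e2 := hrec2 0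
    rw [h0, h1] at e2
    push_cast at e2
    show derivative (derivative (derivative (H 2)))
        + C (2 * ((1:ℕ) + 1 : ℝ)) * derivative (H 2)
        + C (4 * ((1:ℕ) + 1 : ℝ)) * X * H 2
      = C (2 * ((1:ℕ) + 1 : ℝ)) * (2 * X ^ 2 + 1) * H 1
    rw [d1, h1]
    simp only [derivative_mul, derivative_C, derivative_X, zero_mul, zero_add, mul_one,
      derivative_one, mul_zero, add_zero]
    push_cast
    simp only [map_add, map_mul, map_one, map_zero, map_ofNat] at e2 d1 ⊢
    linear_combination (4 * (X : Polynomial ℝ)) * e2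
  | (m+2) =>
    have d1 : derivative (H (m+3)) = C ((m:ℝ)+2+1) * H (m+2) := by
      have := hd (m+2); push_cast at this; exact this
    have d2 : derivative (H (m+2)) = C ((m:ℝ)+1+1) * H (m+1) := by
      have := hd (m+1); push_cast at this; exact this
    have d3 : derivative (H (m+1)) = C ((m:ℝ)+1) * H m := hd m
    have e1 := hrec2 (m+1)
    have e2 := hrec2 m
    show derivative (derivative (derivative (H (m+3))))
        + C (2 * ((m+2:ℕ) + 1 : ℝ)) * derivative (H (m+3))
        + C (4 * ((m+2:ℕ) + 1 : ℝ)) * X * H (m+3)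
      = C (2 * ((m+2:ℕ) + 1 : ℝ)) * (2 * X ^ 2 + 1) * H (m+2)
    rw [d1, derivative_mul, derivative_C, zero_mul, zero_add, d2,
      derivative_mul, derivative_C, zero_mul, zero_add,
      derivative_mul, derivative_C, zero_mul, zero_add, d3]
    push_cast at e1 e2 ⊢
    simp only [map_add, map_mul, map_one, map_zero, map_ofNat] at e1 e2 ⊢
    linear_combination (2 * ((C (m:ℝ)) + 3) * (X : Polynomial ℝ)) * e1
      + (((C (m:ℝ)) + 3) * ((C (m:ℝ)) + 2)) * e2
end

section
/- The monic Hermite polynomials satisfy the fourth structure relation H_{n+1}^{(4)}(x) + 2(n+1)H_{n+1}''(x) + 4(n+1)x·H_{n+1}'(x) + 8(n+1)(x²+1)H_{n+1}(x) = 4(n+1)x(2x²+3)·H_n(x) for all n ≥ 0. -/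
open Polynomial

/-- The monic Hermite polynomials satisfy the fourth structure relation
`H_{n+1}⁽⁴⁾ + 2(n+1)H_{n+1}'' + 4(n+1)x·H_{n+1}' + 8(n+1)(x²+1)H_{n+1}
  = 4(n+1)x(2x²+3)·H_n`. -/
theorem hermite_fourth_structure_relation
    (H : ℕ → Polynomial ℝ)
    (h0 : H 0 = 1) (h1 : H 1 = X)
    (hrec : ∀ n, H (n + 2) = X * H (n + 1) - C (((n : ℝ) + 1) / 2) * H n) :
    ∀ n, derivative (derivative (derivative (derivative (H (n + 1)))))
        + C (2 * ((n : ℝ) + 1)) * derivative (derivative (H (n + 1)))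
        + C (4 * ((n : ℝ) + 1)) * X * derivative (H (n + 1))
        + C (8 * ((n : ℝ) + 1)) * (X ^ 2 + 1) * H (n + 1)
      = C (4 * ((n : ℝ) + 1)) * X * (2 * X ^ 2 + 3) * H n := by
  have hhalf : ∀ x : ℝ, (2 : ℝ[X]) * C (x / 2) = C x := by
    intro x
    rw [show (2 : ℝ[X]) = C 2 from (map_ofNat C 2).symm, ← C_mul]
    congr 1
    ring
  -- derivative formula : H_{n+1}' = (n+1) H_n
  have hd : ∀ n : ℕ, derivative (H (n + 1)) = C ((n : ℝ) + 1) * H n := by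
    have key : ∀ n : ℕ, derivative (H (n + 1)) = C ((n : ℝ) + 1) * H n ∧
        derivative (H (n + 2)) = C ((n : ℝ) + 2) * H (n + 1) := by
      intro n
      induction n with
      | zero =>
        constructor
        · simp [h1, h0]
        · rw [hrec 0, h1, h0]
          simp [map_ofNat]
          ring
      | succ k ih =>
        obtain ⟨ih1, ih2⟩ := ih
        constructor
        · rw [show (k : ℕ) + 1 + 1 = k + 2 by ring, ih2]
          push_cast
          ring_nf
        · rw [hrec (k + 1), derivative_sub, derivative_mul, derivative_mul,
            derivative_X, derivative_C, show (k : ℕ) + 1 + 1 = k + 2 by ring, ih2, ih1]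
          rw [hrec k]
          push_cast
          have hcross : C (((k:ℝ) + 1 + 1) / 2) * C ((k:ℝ) + 1)
              = C ((k:ℝ) + 2) * C (((k:ℝ) + 1) / 2) := by
            rw [← C_mul, ← C_mul]
            congr 1
            ring
          simp only [C_add, C_1, map_ofNat] at hcross ⊢
          linear_combination (-(H k)) * hcross
    exact fun n => (key n).1
  -- lowering relation : H_n' = 2 X H_n − 2 H_{n+1}
  have hlow : ∀ n : ℕ, derivative (H n) = 2 * X * H n - 2 * H (n + 1) := by
    intro n
    cases n with
    | zero => simp [h0, h1]
    | succ k =>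
      rw [hd k, hrec k]
      have e1 := hhalf ((k : ℝ) + 1)
      linear_combination (-(H k)) * e1
  intro n
  simp only [hd n, derivative_mul, derivative_sub, derivative_add, derivative_C,
    derivative_X, derivative_ofNat, derivative_one, derivative_zero, hlow n]
  simp only [C_mul, map_ofNat, C_add, C_1]
  ring
end

section
/- Each monic Hermite polynomial H_{n+1} satisfies the third-order differential equation H_{n+1}'''(x) + (-4x² + 2n)·H_{n+1}'(x) + 4(n+1)x·H_{n+1}(x) = 0 for all n ≥ 0. -/
open Polynomial

/-- Each monic Hermite polynomial satisfies the third-order differential equation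
`H_{n+1}''' + (-4x² + 2n)·H_{n+1}' + 4(n+1)x·H_{n+1} = 0`. -/
theorem hermite_third_order_ode
    (H : ℕ → Polynomial ℝ)
    (h0 : H 0 = 1) (h1 : H 1 = X)
    (hrec : ∀ n, H (n + 2) = X * H (n + 1) - C (((n : ℝ) + 1) / 2) * H n) :
    ∀ n, derivative (derivative (derivative (H (n + 1))))
        + (-4 * X ^ 2 + C (2 * (n : ℝ))) * derivative (H (n + 1))
        + C (4 * ((n : ℝ) + 1)) * X * H (n + 1) = 0 := by
  have half : ∀ p q : ℝ[X], 2 * p = 2 * q → p = q := fun p q h =>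
    mul_left_cancel₀ two_ne_zero h
  -- fraction-free recurrence
  have hrec2 : ∀ n, 2 * H (n + 2) = 2 * X * H (n + 1) - ((n : ℝ[X]) + 1) * H n := by
    intro n
    have hu : (C ((((n : ℝ)) + 1) / 2) : ℝ[X]) * 2 = (n : ℝ[X]) + 1 := by
      rw [show (2:ℝ[X]) = C (2:ℝ) from (map_ofNat (C : ℝ →+* ℝ[X]) 2).symm,
        ← C_mul, div_mul_cancel₀ _ two_ne_zero]
      simp
    rw [hrec n]
    linear_combination (- H n) * hu
  -- derivative identity
  have hd : ∀ n, derivative (H (n + 1)) = ((n : ℝ[X]) + 1) * H n := by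
    intro n
    induction n using Nat.twoStepInduction with
    | zero => simp [h1, h0]
    | one =>
      apply half
      have h2 := congrArg derivative (hrec2 0)
      simp only [derivative_mul, derivative_sub, derivative_add, derivative_X,
        derivative_one, derivative_ofNat, derivative_natCast, h0, h1] at h2
      rw [h1]
      linear_combination (norm := (push_cast; ring1)) h2
    | more n ih1 ih2 =>
      apply half
      have h2 := congrArg derivative (hrec2 (n + 1))
      simp only [derivative_mul, derivative_sub, derivative_add, derivative_X,
        derivative_one, derivative_ofNat, derivative_natCast] at h2
      linear_combination (norm := (push_cast; ring1)) h2 + 2 * X * ih2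
        - ((n : ℝ[X]) + 2) * ih1 - ((n : ℝ[X]) + 2) * hrec2 n
  -- second-order ODE
  have hode2 : ∀ n, derivative (derivative (H (n + 1)))
      = 2 * X * derivative (H (n + 1)) - 2 * ((n : ℝ[X]) + 1) * H (n + 1) := by
    intro n
    have hdd := congrArg derivative (hd n)
    simp only [derivative_mul, derivative_add, derivative_one, derivative_ofNat,
      derivative_natCast] at hdd
    cases n with
    | zero =>
      rw [h1] at *
      simp
    | succ m =>
      linear_combination (norm := (push_cast; ring1)) hdd
        + ((m : ℝ[X]) + 2) * hd m - 2 * X * hd (m + 1) + ((m : ℝ[X]) + 2) * hrec2 m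
  intro n
  have h3 := congrArg derivative (hode2 n)
  simp only [derivative_mul, derivative_sub, derivative_add, derivative_X,
    derivative_one, derivative_ofNat, derivative_natCast] at h3
  simp only [map_mul, map_add, map_ofNat, map_natCast, map_one]
  linear_combination (norm := (push_cast; ring1)) h3 + 2 * X * hode2 n
end

section
/- For the Laguerre–Hahn family of case 1 analogous to Hermite, with Φ(x)=1, C_0(x) = 2((ρ-2)/ρ)x + 4λ/ρ, D_0(x) = -2/ρ, B_0(x) = 2((ρ-1)/ρ)x² + 2λ((2-ρ)/ρ)x + 1 - ρ(τ+1) - 2λ²/ρ, β_0 = λ, β_{n+1} = 0, γ_1 = ρ(τ+1)/2, γ_{n+1} = (n+τ+1)/2 for n ≥ 1, the sequences C_{n+1}(x) = -2x and D_{n+1}(x) = -2 (n ≥ 0) satisfy the recurrences C_{n+1} = -C_n + 2(x-β_n)D_n for n ≥ 1 and γ_{n+1}D_{n+1} = -Φ + γ_n D_{n-1} - (x-β_n)C_n + (x-β_n)²D_n for n ≥ 1, as well as the n=0 cases C_1 = -C_0 + 2(x-β_0)D_0 and γ_1 D_1 = -Φ + (x-β_0)²D_0 - (x-β_0)C_0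 + γ_0·B_0 with the convention γ_0 D_{-1} replaced by B_0. -/
open Polynomial

/-- Case 1 analogous to Hermite: the explicit data satisfy the Laguerre–Hahn
structure-relation recurrences (SR-1) and (SR-2) for `n ≥ 1`, together with
the `n = 0` cases, where the term `γ₀D₋₁` is read as `B₀`. -/
theorem hermite_case1_structure_recurrences
    (τ lam ρ : ℂ) (hρ : ρ ≠ 0) (hτ : ∀ n : ℕ, 1 ≤ n → τ ≠ -(n : ℂ))
    (Φ B0 : Polynomial ℂ) (β γ : ℕ → ℂ) (Cc Dd : ℕ → Polynomial ℂ)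
    (hΦ : Φ = 1)
    (hB0 : B0 = C (2 * (ρ - 1) / ρ) * X ^ 2 + C (2 * lam * (2 - ρ) / ρ) * X
      + C (1 - ρ * (τ + 1) - 2 * lam ^ 2 / ρ))
    (hC0 : Cc 0 = C (2 * (ρ - 2) / ρ) * X + C (4 * lam / ρ))
    (hD0 : Dd 0 = C (-2 / ρ))
    (hβ0 : β 0 = lam) (hβ : ∀ n, β (n + 1) = 0)
    (hγ1 : γ 1 = ρ * (τ + 1) / 2)
    (hγ : ∀ n, 1 ≤ n → γ (n + 1) = ((n : ℂ) + τ + 1) / 2)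
    (hCn : ∀ n, Cc (n + 1) = -2 * X) (hDn : ∀ n, Dd (n + 1) = -2) :
    (∀ n, 1 ≤ n → Cc (n + 1) = -Cc n + 2 * (X - C (β n)) * Dd n) ∧
    (∀ n, 1 ≤ n → C (γ (n + 1)) * Dd (n + 1) =
      -Φ + C (γ n) * Dd (n - 1) - (X - C (β n)) * Cc n
        + (X - C (β n)) ^ 2 * Dd n) ∧
    (Cc 1 = -Cc 0 + 2 * (X - C (β 0)) * Dd 0) ∧
    (C (γ 1) * Dd 1 =
      -Φ + (X - C (β 0)) ^ 2 * Dd 0 - (X - C (β 0)) * Cc 0 + B0) := by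
  refine ⟨?_, ?_, ?_, ?_⟩
  · rintro (_ | n) h
    · omega
    · rw [hCn, hCn, hβ, hDn]
      apply Polynomial.funext; intro x
      simp
      ring
  · rintro (_ | n) h
    · omega
    rcases n with _ | m
    · -- n = 1
      rw [hγ 1 le_rfl, hγ1, hΦ, hβ 0, hCn, hDn, hDn]
      show _ = _ + _ * Dd 0 - _ + _
      rw [hD0]
      apply Polynomial.funext; intro x
      simp
      field_simp
      ring
    · -- n = m + 2
      rw [hγ (m + 2) (by omega), hγ (m + 1) (by omega), hΦ, hβ (m + 1), hCn, hDn, hDn]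
      show _ = _ + _ * Dd (m + 1) - _ + _
      rw [hDn]
      apply Polynomial.funext; intro x
      push_cast
      simp
      ring
  · rw [hCn, hC0, hβ0, hD0]
    apply Polynomial.funext; intro x
    simp
    field_simp
    ring
  · rw [hγ1, hDn, hΦ, hβ0, hD0, hC0, hB0]
    apply Polynomial.funext; intro x
    simp
    field_simp
    ring
end

section
/- Given polynomials satisfying the three relations (R1) Φ·(P¹_{n-1})' = D_n·P¹_n - (1/2)(C_{n+1}-C_0)·P¹_{n-1} - D_0·P_n, (R2) Φ·P_n' = D_n·P_{n+1} - (1/2)(C_{n+1}+C_0)·P_n + B_0·P¹_{n-1}, (R3) Φ·(P¹_n)' = (1/2)(C_{n+1}+C_0)·P¹_n - γ_{n+1}D_{n+1}·P¹_{n-1} - D_0·P_{n+1}, and the structure relation (R4) Φ·P_{n+1}' - B_0·P¹_n = (1/2)(C_{n+1}-C_0)·P_{n+1} - γ_{n+1}D_{n+1}·P_n, differentiating (R4), multiplying by Φ, and substituting (R2),(R3) yields: -2γ_{n+1}B_0D_{n+1}·P¹_{n-1} + ((1/2)(C_{n+1}+C_0)B_0 + ΦB_0')·P¹_n + γ_{n+1}((1/2)(C_{n+1}+C_0)D_{n+1}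 - ΦD_{n+1}')·P_n = Φ²P_{n+1}'' + Φ(Φ' + M_{0,1})P_{n+1}' + (ΦM_{0,1}' + B_0D_0 + γ_{n+1}D_nD_{n+1})P_{n+1}, where M_{0,1} = -(1/2)(C_{n+1}-C_0). -/
open Polynomial

/-- Given the relations (R1)–(R4), differentiating (R4), multiplying by `Φ`,
and substituting (R2), (R3) yields the second structure relation of
Theorem (lemma-4RS) for Laguerre–Hahn polynomials. -/
theorem laguerre_hahn_second_relation
    (Φ B0 C0 D0 Cn1 Dn Dn1 Pn Pn1 P1nm1 P1n : Polynomial ℂ) (γn1 : ℂ)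
    (hR1 : Φ * derivative P1nm1 =
      Dn * P1n - Polynomial.C (1 / 2 : ℂ) * (Cn1 - C0) * P1nm1 - D0 * Pn)
    (hR2 : Φ * derivative Pn =
      Dn * Pn1 - Polynomial.C (1 / 2 : ℂ) * (Cn1 + C0) * Pn + B0 * P1nm1)
    (hR3 : Φ * derivative P1n =
      Polynomial.C (1 / 2 : ℂ) * (Cn1 + C0) * P1n
        - Polynomial.C γn1 * Dn1 * P1nm1 - D0 * Pn1)
    (hR4 : Φ * derivative Pn1 - B0 * P1n =
      Polynomial.C (1 / 2 : ℂ) * (Cn1 - C0) * Pn1 - Polynomial.C γn1 * Dn1 * Pn) :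
    -2 * Polynomial.C γn1 * B0 * Dn1 * P1nm1
      + (Polynomial.C (1 / 2 : ℂ) * (Cn1 + C0) * B0 + Φ * derivative B0) * P1n
      + Polynomial.C γn1 * (Polynomial.C (1 / 2 : ℂ) * (Cn1 + C0) * Dn1
          - Φ * derivative Dn1) * Pn
    = Φ ^ 2 * derivative (derivative Pn1)
      + Φ * (derivative Φ + (-(Polynomial.C (1 / 2 : ℂ)) * (Cn1 - C0)))
          * derivative Pn1
      + (Φ * derivative (-(Polynomial.C (1 / 2 : ℂ)) * (Cn1 - C0))
          + B0 * D0 + Polynomial.C γn1 * (Dn * Dn1)) * Pn1 := by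
  have h4' := congrArg derivative hR4
  simp only [derivative_mul, derivative_sub, derivative_neg, derivative_C] at h4' ⊢
  linear_combination -Φ * h4' - B0 * hR3 + Polynomial.C γn1 * Dn1 * hR2
end
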